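/- Fix classes 1,…,n with rates λ_1,…,λ_n > 0 and a cutoff class k. Let S be a nonnegative real random variable, and conditionally on S let the counts N_1,…,N_n be mutually independent with N_i ~ Poisson(λ_i·S). Let ((O^{(i,j)}, A^{(i,j)}))_{i<k, j≥1} be i.i.d. random elements of ℝ_{≥0} × ℕ^n, independent of (S, N_1,…,N_n), with common joint transform g(θ, z) = E[e^{−θ·O}·∏_{l=1}^n z_l^{A_l}]. Define R = S + Σ_{i<k} Σ_{j=1}^{N_i} O^{(i,j)} and, for each l, A_l = N_l + Σ_{i<k} Σ_{j=1}^{N_i} A^{(i,j)}_l. Then for all θ ≥ 0 and z ∈ [0,1]^n: E[e^{−θR} ∏_{l=1}^n z_l^{A_l}] = S̃(θ + Σ_{i≥k} λ_i(1−z_i) + Σ_{i<k} λ_i(1 − z_i·g(θ, z))). -/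

import Mathlib

/-!
Condition on the vector of counts `N = a`. Given `N = a`, the pair (effective size, arrivals)
is `(S, a)` plus the sum of the first `a i` overhead chains of each class `i < k`, and
`(x, v) ↦ e^{-θx} ∏ z_l^{v_l}` is a character of the additive monoid `ℝ × ℕⁿ`; since the chains
are i.i.d. and independent of `(S, N)`, the transform on `{N = a}` factorises as
`E[e^{-θS} z^a ; N = a] · g^{∑_{i<k} a_i}`. Summing over `a`, the conditional Poisson law of `N`
contributes the generating function `∑_m w^m P(Poisson(λx) = m) = e^{-λx(1-w)}` with `w = z_i g`
for `i < k` and `w = z_i` otherwise, which is the claimed transform of `S`.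
-/

open MeasureTheory ProbabilityTheory Real Finset

open scoped ENNReal NNReal Nat

lemma AddChar.map_sum_eq_prod {ι A M : Type*} [AddCommMonoid A] [CommMonoid M]
    (ψ : AddChar A M) (s : Finset ι) (f : ι → A) : ψ (∑ i ∈ s, f i) = ∏ i ∈ s, ψ (f i) := by
  classical
  induction s using Finset.induction_on with
  | empty => simp
  | insert i s hi ih => rw [sum_insert hi, prod_insert hi, ψ.map_add_eq_mul, ih]

lemma Measurable.finset_sum_range_apply {Ω M : Type*} [MeasurableSpace Ω] [AddCommMonoid M]
    [MeasurableSpace M] [MeasurableAdd₂ M] {m : Ω → ℕ} (hm : Measurable m) {f : ℕ → Ω → M}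
    (hf : ∀ j, Measurable (f j)) : Measurable fun ω => ∑ j ∈ range (m ω), f j ω :=
  (measurable_from_prod_countable_left (f := fun p : Ω × ℕ => ∑ j ∈ range p.2, f j p.1)
    fun t => Finset.measurable_sum (range t) fun j _ => hf j).comp (measurable_id.prodMk hm)

lemma Fin.prod_univ_ite_lt {M : Type*} [CommMonoid M] {m t : ℕ} (ht : t ≤ m) (h : ℕ → M) :
    ∏ j : Fin m, (if (j : ℕ) < t then h j else 1) = ∏ j ∈ range t, h j := by
  rw [Fin.prod_univ_eq_prod_range (fun j => if j < t then h j else 1), ← prod_filter]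
  congr 1
  ext j
  simp only [mem_filter, mem_range]
  omega

lemma prod_subtype_prod_fin_ite {ι M : Type*} [Fintype ι] [CommMonoid M] (P : ι → Prop)
    [DecidablePred P] {m : ℕ} {a : ι → ℕ} (ha : ∀ i, a i ≤ m) (f : ι → ℕ → M) :
    ∏ p : {i // P i} × Fin m, (if (p.2 : ℕ) < a p.1 then f p.1 p.2 else 1)
      = ∏ i ∈ univ.filter P, ∏ j ∈ range (a i), f i j := by
  rw [Fintype.prod_prod_type, prod_subtype (univ.filter P) (p := P) (by simp)
    fun i => ∏ j ∈ range (a i), f i j]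
  exact Fintype.prod_congr _ _ fun i => Fin.prod_univ_ite_lt (ha i) (f i)

lemma MeasureTheory.lintegral_eq_tsum_setLIntegral_preimage_singleton {Ω β : Type*}
    [MeasurableSpace Ω] {μ : Measure Ω} [Countable β] [MeasurableSpace β]
    [MeasurableSingletonClass β] {X : Ω → β}
    (hX : Measurable X) (f : Ω → ℝ≥0∞) :
    ∫⁻ ω, f ω ∂μ = ∑' b, ∫⁻ ω in X ⁻¹' {b}, f ω ∂μ := by
  rw [← lintegral_iUnion (fun b => hX (measurableSet_singleton b)) (pairwise_disjoint_fiber X),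
    ← Set.preimage_iUnion, Set.iUnion_of_singleton, Set.preimage_univ, setLIntegral_univ]

lemma MeasureTheory.lintegral_fintype_prod_eq_prod {ι : Type*} [Fintype ι] {X : ι → Type*}
    [∀ i, MeasurableSpace (X i)] (ν : ∀ i, Measure (X i)) [∀ i, IsProbabilityMeasure (ν i)]
    {f : ∀ i, X i → ℝ≥0∞} (hf : ∀ i, Measurable (f i)) :
    ∫⁻ x, ∏ i, f i (x i) ∂Measure.pi ν = ∏ i, ∫⁻ y, f i y ∂ν i := by
  rw [lintegral_prod_eq_prod_lintegral_of_indepFun _ _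
    (iIndepFun_pi fun i => (hf i).aemeasurable) fun i => (hf i).comp (measurable_pi_apply i)]
  exact prod_congr rfl fun i _ => (measurePreserving_eval ν i).lintegral_comp (hf i)

lemma ENNReal.tsum_fin_pi_prod {β : Type*} {n : ℕ} (F : Fin n → β → ℝ≥0∞) :
    ∑' b : Fin n → β, ∏ i, F i (b i) = ∏ i, ∑' y, F i y := by
  induction n with
  | zero => simp
  | succ n ih =>
    rw [← (Fin.consEquiv fun _ => β).tsum_eq]
    simp only [Fin.consEquiv_apply, Fin.prod_univ_succ, Fin.cons_zero, Fin.cons_succ]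
    rw [ENNReal.tsum_prod']
    simp only [ENNReal.tsum_mul_left, ENNReal.tsum_mul_right, ih]

lemma MeasureTheory.Measure.prod_pi_eq {α ι : Type*} [Fintype ι] {X : ι → Type*}
    [MeasurableSpace α] [∀ i, MeasurableSpace (X i)] {ρ : Measure α} [IsFiniteMeasure ρ]
    {ν : ∀ i, Measure (X i)} [∀ i, IsFiniteMeasure (ν i)] {κ : Measure (α × ∀ i, X i)}
    (h : ∀ s, MeasurableSet s → ∀ B : ∀ i, Set (X i), (∀ i, MeasurableSet (B i)) →
      κ (s ×ˢ Set.univ.pi B) = ρ s * ∏ i, ν i (B i)) :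
    ρ.prod (Measure.pi ν) = κ := by
  refine ext_of_generate_finite (Set.image2 (· ×ˢ ·) {s | MeasurableSet s}
      (Set.univ.pi '' Set.univ.pi fun i => {t | MeasurableSet t}))
    (generateFrom_eq_prod MeasurableSpace.generateFrom_measurableSet generateFrom_pi
      isCountablySpanning_measurableSet
      (IsCountablySpanning.pi fun _ => isCountablySpanning_measurableSet)).symm
    (MeasurableSpace.isPiSystem_measurableSet.prod isPiSystem_pi) ?_ ?_
  · rintro _ ⟨s, hs, _, ⟨B, hB, rfl⟩, rfl⟩
    rw [h s hs B fun i => hB i (Set.mem_univ i), Measure.prod_prod, Measure.pi_pi]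
  · have := h Set.univ MeasurableSet.univ (fun _ => Set.univ) fun _ => MeasurableSet.univ
    rw [Set.pi_univ, Set.univ_prod_univ] at this
    rw [this, ← Set.univ_prod_univ, Measure.prod_prod, ← Set.pi_univ, Measure.pi_pi]

lemma hasSum_pow_mul_poissonPMFReal (r : ℝ≥0) (w : ℝ) :
    HasSum (fun m => w ^ m * poissonPMFReal r m) (exp (-(r * (1 - w)))) := by
  have hexp : HasSum (fun m => (w * r) ^ m / m !) (exp (w * r)) := by
    rw [exp_eq_exp_ℝ]
    exact NormedSpace.expSeries_div_hasSum_exp (w * r)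
  have hterm : ∀ m : ℕ, w ^ m * poissonPMFReal r m = exp (-r) * ((w * r) ^ m / m !) := by
    intro m
    unfold poissonPMFReal
    ring
  rw [show -(r * (1 - w)) = -r + w * r by ring, exp_add]
  simpa only [hterm] using hexp.mul_left (exp (-r))

lemma tsum_ofReal_pow_mul_poissonPMFReal {c w : ℝ} (hc : 0 ≤ c) (hw : 0 ≤ w) :
    ∑' m, ENNReal.ofReal (w ^ m * poissonPMFReal (Real.toNNReal c) m)
      = ENNReal.ofReal (exp (-(c * (1 - w)))) := by
  have h := hasSum_pow_mul_poissonPMFReal (Real.toNNReal c) w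
  rw [Real.coe_toNNReal _ hc] at h
  rw [← ENNReal.ofReal_tsum_of_nonneg (fun m => mul_nonneg (pow_nonneg hw m) poissonPMFReal_nonneg)
    h.summable, h.tsum_eq]

lemma measurable_poissonPMFReal_toNNReal_mul (c : ℝ) (m : ℕ) :
    Measurable fun x => poissonPMFReal (Real.toNNReal (c * x)) m := by
  unfold poissonPMFReal
  fun_prop

section TransformChar

variable {n : ℕ}

noncomputable def jointTransformChar (θ : ℝ) (z : Fin n → ℝ) : AddChar (ℝ × (Fin n → ℕ)) ℝ where
  toFun p := exp (-(θ * p.1)) * ∏ l, z l ^ p.2 l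
  map_zero_eq_one' := by simp
  map_add_eq_mul' p q := by
    simp only [Prod.fst_add, Prod.snd_add, Pi.add_apply, mul_add, neg_add, exp_add, pow_add,
      prod_mul_distrib]
    ring

lemma jointTransformChar_apply (θ : ℝ) (z : Fin n → ℝ) (p : ℝ × (Fin n → ℕ)) :
    jointTransformChar θ z p = exp (-(θ * p.1)) * ∏ l, z l ^ p.2 l := rfl

lemma measurable_jointTransformChar (θ : ℝ) (z : Fin n → ℝ) :
    Measurable (jointTransformChar θ z) := by
  simp only [DFunLike.coe, jointTransformChar]
  fun_prop

lemma jointTransformChar_nonneg {θ : ℝ} {z : Fin n → ℝ} (hz : ∀ l, 0 ≤ z l)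
    (p : ℝ × (Fin n → ℕ)) : 0 ≤ jointTransformChar θ z p :=
  mul_nonneg (exp_nonneg _) (prod_nonneg fun l _ => pow_nonneg (hz l) _)

lemma jointTransformChar_le_one {θ : ℝ} (hθ : 0 ≤ θ) {z : Fin n → ℝ}
    (hz : ∀ l, z l ∈ Set.Icc (0 : ℝ) 1) {p : ℝ × (Fin n → ℕ)} (hp : 0 ≤ p.1) :
    jointTransformChar θ z p ≤ 1 := by
  rw [jointTransformChar_apply]
  exact mul_le_one₀ (exp_le_one_iff.2 (by nlinarith))
    (prod_nonneg fun l _ => pow_nonneg (hz l).1 _)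
    (prod_le_one (fun l _ => pow_nonneg (hz l).1 _) fun l _ => pow_le_one₀ (hz l).1 (hz l).2)

lemma integrable_jointTransformChar {θ : ℝ} (hθ : 0 ≤ θ) {z : Fin n → ℝ}
    (hz : ∀ l, z l ∈ Set.Icc (0 : ℝ) 1) {ν : Measure (ℝ × (Fin n → ℕ))} [IsFiniteMeasure ν]
    (hν : ν {p | p.1 < 0} = 0) : Integrable (jointTransformChar θ z) ν := by
  refine (integrable_const (1 : ℝ)).mono'
    (measurable_jointTransformChar θ z).aestronglyMeasurable ?_
  filter_upwards [measure_eq_zero_iff_ae_notMem.1 hν] with p hp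
  rw [norm_of_nonneg (jointTransformChar_nonneg (fun l => (hz l).1) p)]
  exact jointTransformChar_le_one hθ hz (not_lt.1 hp)

noncomputable def poissonWeight (lam : Fin n → ℝ) (a : Fin n → ℕ) (x : ℝ) : ℝ :=
  ∏ l, poissonPMFReal (Real.toNNReal (lam l * x)) (a l)

lemma poissonWeight_nonneg (lam : Fin n → ℝ) (a : Fin n → ℕ) (x : ℝ) :
    0 ≤ poissonWeight lam a x :=
  prod_nonneg fun _ _ => poissonPMFReal_nonneg

lemma poissonWeight_le_one (lam : Fin n → ℝ) (a : Fin n → ℕ) (x : ℝ) :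
    poissonWeight lam a x ≤ 1 :=
  prod_le_one (fun _ _ => poissonPMFReal_nonneg) fun _ _ =>
    le_hasSum (poissonPMFRealSum _) _ fun _ _ => poissonPMFReal_nonneg

lemma measurable_poissonWeight (lam : Fin n → ℝ) (a : Fin n → ℕ) :
    Measurable (poissonWeight lam a) :=
  Finset.measurable_prod _ fun l _ => measurable_poissonPMFReal_toNNReal_mul (lam l) (a l)

lemma isFiniteMeasure_withDensity_poissonWeight {Ω : Type*} [MeasurableSpace Ω] {μ : Measure Ω}
    [IsFiniteMeasure μ] (S : Ω → ℝ) (lam : Fin n → ℝ) (a : Fin n → ℕ) :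
    IsFiniteMeasure ((μ.map S).withDensity fun x => ENNReal.ofReal (poissonWeight lam a x)) :=
  isFiniteMeasure_withDensity_ofReal ((integrable_const (1 : ℝ)).mono'
    (measurable_poissonWeight lam a).aestronglyMeasurable (ae_of_all _ fun x => by
      rw [norm_of_nonneg (poissonWeight_nonneg lam a x)]
      exact poissonWeight_le_one lam a x)).2

lemma sum_mul_one_sub_mul_ite {ι : Type*} [Fintype ι] [LinearOrder ι] (k : ι) (lam z : ι → ℝ)
    (g : ℝ) :
    ∑ l, lam l * (1 - z l * if l < k then g else 1)
      = ∑ i ∈ univ.filter (fun i => k ≤ i), lam i * (1 - z i)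
          + ∑ i ∈ univ.filter (fun i => i < k), lam i * (1 - z i * g) := by
  rw [← sum_filter_add_sum_filter_not univ (· < k), add_comm]
  simp only [not_lt]
  congr 1 <;> refine sum_congr rfl fun l hl => ?_
  · simp [not_lt.2 (mem_filter.1 hl).2]
  · simp [(mem_filter.1 hl).2]

lemma tsum_ofReal_poissonWeight_mul_jointTransformChar {lam : Fin n → ℝ}
    (hlam : ∀ l, 0 ≤ lam l) (k : Fin n) (θ : ℝ) {z : Fin n → ℝ} (hz : ∀ l, 0 ≤ z l) {g : ℝ}
    (hg : 0 ≤ g) {x : ℝ} (hx : 0 ≤ x) :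
    ∑' a, ENNReal.ofReal (poissonWeight lam a x * jointTransformChar θ z (x, a) *
        ∏ i ∈ univ.filter (fun i => i < k), g ^ a i)
      = ENNReal.ofReal (exp (-((θ + ∑ i ∈ univ.filter (fun i => k ≤ i), lam i * (1 - z i)
          + ∑ i ∈ univ.filter (fun i => i < k), lam i * (1 - z i * g)) * x))) := by
  have hw : ∀ l, 0 ≤ z l * if l < k then g else 1 := fun l =>
    mul_nonneg (hz l) (by split_ifs <;> simp [hg])
  set q : Fin n → ℕ → ℝ := fun l m =>
    (z l * if l < k then g else 1) ^ m * poissonPMFReal (Real.toNNReal (lam l * x)) m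
  have hq : ∀ l m, 0 ≤ q l m := fun l m =>
    mul_nonneg (pow_nonneg (hw l) m) poissonPMFReal_nonneg
  have hterm : ∀ a, poissonWeight lam a x * jointTransformChar θ z (x, a) *
      ∏ i ∈ univ.filter (fun i => i < k), g ^ a i = exp (-(θ * x)) * ∏ l, q l (a l) := by
    intro a
    simp only [poissonWeight, jointTransformChar_apply, q, prod_filter, mul_pow, ite_pow,
      one_pow, prod_mul_distrib]
    ring
  simp_rw [hterm, ENNReal.ofReal_mul (exp_nonneg _),
    ENNReal.ofReal_prod_of_nonneg fun l _ => hq l _]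
  rw [ENNReal.tsum_mul_left, ENNReal.tsum_fin_pi_prod fun l m => ENNReal.ofReal (q l m),
    prod_congr rfl fun l _ => tsum_ofReal_pow_mul_poissonPMFReal (mul_nonneg (hlam l) hx) (hw l),
    ← ENNReal.ofReal_prod_of_nonneg fun l _ => exp_nonneg _,
    ← ENNReal.ofReal_mul (exp_nonneg _), ← exp_sum, ← exp_add, add_assoc θ,
    ← sum_mul_one_sub_mul_ite, add_mul, sum_mul, neg_add, ← sum_neg_distrib]
  congr 2
  ring_nf

end TransformChar

section JobModel

variable {Ω : Type*} {n : ℕ}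

def overheadChain (O : Fin n → ℕ → Ω → ℝ) (AO : Fin n → ℕ → Fin n → Ω → ℕ) (i : Fin n)
    (j : ℕ) (ω : Ω) : ℝ × (Fin n → ℕ) :=
  (O i j ω, fun l => AO i j l ω)

def effectiveSizeArrivals (k : Fin n) (S : Ω → ℝ) (N : Fin n → Ω → ℕ)
    (O : Fin n → ℕ → Ω → ℝ) (AO : Fin n → ℕ → Fin n → Ω → ℕ) (ω : Ω) : ℝ × (Fin n → ℕ) :=
  (S ω, Function.swap N ω) +
    ∑ i ∈ univ.filter (fun i => i < k), ∑ j ∈ range (N i ω), overheadChain O AO i j ω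

variable {k : Fin n} {S : Ω → ℝ} {N : Fin n → Ω → ℕ} {O : Fin n → ℕ → Ω → ℝ}
  {AO : Fin n → ℕ → Fin n → Ω → ℕ}

lemma prodMk_eq_effectiveSizeArrivals {R : Ω → ℝ} {A : Fin n → Ω → ℕ}
    (hR : ∀ ω, R ω = S ω + ∑ i ∈ univ.filter (fun i => i < k), ∑ j ∈ range (N i ω), O i j ω)
    (hA : ∀ l ω, A l ω = N l ω + ∑ i ∈ univ.filter (fun i => i < k),
      ∑ j ∈ range (N i ω), AO i j l ω) (ω : Ω) :
    (R ω, fun l => A l ω) = effectiveSizeArrivals k S N O AO ω := by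
  ext
  · simp [effectiveSizeArrivals, hR, Prod.fst_sum, overheadChain]
  · simp [effectiveSizeArrivals, hA, Prod.snd_sum, Finset.sum_apply, overheadChain, Function.swap]

lemma addChar_effectiveSizeArrivals_of_swap_eq (ψ : AddChar (ℝ × (Fin n → ℕ)) ℝ)
    {a : Fin n → ℕ} {ω : Ω} (hω : Function.swap N ω = a) :
    ψ (effectiveSizeArrivals k S N O AO ω) = ψ (S ω, a) *
      ∏ i ∈ univ.filter (fun i => i < k), ∏ j ∈ range (a i), ψ (overheadChain O AO i j ω) := by
  simp only [effectiveSizeArrivals, hω, fun i => congr_fun hω i, ψ.map_add_eq_mul,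
    ψ.map_sum_eq_prod]

variable [MeasurableSpace Ω]

def HasJointLaw (μ : Measure Ω) (lam : Fin n → ℝ) (k : Fin n) (S : Ω → ℝ)
    (N : Fin n → Ω → ℕ) (O : Fin n → ℕ → Ω → ℝ) (AO : Fin n → ℕ → Fin n → Ω → ℕ)
    (ν : Measure (ℝ × (Fin n → ℕ))) : Prop :=
  ∀ (s : Set ℝ), MeasurableSet s → ∀ (a : Fin n → ℕ) (m : ℕ)
    (B : Fin n → Fin m → Set (ℝ × (Fin n → ℕ))), (∀ i j, MeasurableSet (B i j)) →
    (μ {ω | S ω ∈ s ∧ (∀ l, N l ω = a l) ∧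
        ∀ i, i < k → ∀ j : Fin m, overheadChain O AO i j ω ∈ B i j}).toReal
      = (∫ x in s, poissonWeight lam a x ∂(μ.map S)) *
        ∏ i ∈ univ.filter (fun i => i < k), ∏ j : Fin m, (ν (B i j)).toReal

lemma measurable_overheadChain (hO : ∀ i j, Measurable (O i j))
    (hAO : ∀ i j l, Measurable (AO i j l)) (i : Fin n) (j : ℕ) :
    Measurable (overheadChain O AO i j) :=
  (hO i j).prodMk (measurable_pi_lambda _ (hAO i j))

lemma measurable_effectiveSizeArrivals (hS : Measurable S) (hN : ∀ i, Measurable (N i))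
    (hO : ∀ i j, Measurable (O i j)) (hAO : ∀ i j l, Measurable (AO i j l)) :
    Measurable (effectiveSizeArrivals k S N O AO) :=
  (hS.prodMk (measurable_pi_lambda _ hN)).add <| Finset.measurable_sum _ fun i _ =>
    (hN i).finset_sum_range_apply (measurable_overheadChain hO hAO i)

variable {μ : Measure Ω} {lam : Fin n → ℝ} {ν : Measure (ℝ × (Fin n → ℕ))}

theorem HasJointLaw.map_restrict_eq_prod [IsFiniteMeasure μ] [IsFiniteMeasure ν]
    (h : HasJointLaw μ lam k S N O AO ν) (hS : Measurable S) (hO : ∀ i j, Measurable (O i j))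
    (hAO : ∀ i j l, Measurable (AO i j l)) (a : Fin n → ℕ) (M : ℕ) :
    (μ.restrict (Function.swap N ⁻¹' {a})).map
        (fun ω => (S ω, fun p : {i // i < k} × Fin M => overheadChain O AO p.1 p.2 ω))
      = ((μ.map S).withDensity fun x => ENNReal.ofReal (poissonWeight lam a x)).prod
          (Measure.pi fun _ => ν) := by
  have := isFiniteMeasure_withDensity_poissonWeight (μ := μ) S lam a
  have hΦ : Measurable fun ω =>
      (S ω, fun p : {i // i < k} × Fin M => overheadChain O AO p.1 p.2 ω) :=
    hS.prodMk (measurable_pi_lambda _ fun p => measurable_overheadChain hO hAO _ _)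
  refine (Measure.prod_pi_eq fun s hs B hB => ?_).symm
  set B' : Fin n → Fin M → Set (ℝ × (Fin n → ℕ)) := fun i j =>
    if hi : i < k then B (⟨i, hi⟩, j) else Set.univ
  have hB' : ∀ i j, MeasurableSet (B' i j) := fun i j => by
    by_cases hi : i < k <;> simp [B', hi, hB]
  have hset : (fun ω => (S ω, fun p : {i // i < k} × Fin M => overheadChain O AO p.1 p.2 ω)) ⁻¹'
      (s ×ˢ Set.univ.pi B) ∩ Function.swap N ⁻¹' {a}
      = {ω | S ω ∈ s ∧ (∀ l, N l ω = a l) ∧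
          ∀ i, i < k → ∀ j : Fin M, overheadChain O AO i j ω ∈ B' i j} := by
    ext ω
    simp +contextual [B', funext_iff, Function.swap]
    tauto
  have hprod : ∏ i ∈ univ.filter (fun i => i < k), ∏ j : Fin M, (ν (B' i j)).toReal
      = ∏ p : {i // i < k} × Fin M, (ν (B p)).toReal := by
    rw [Fintype.prod_prod_type, prod_subtype _ (p := fun i => i < k) (by simp)]
    exact prod_congr rfl fun i _ => prod_congr rfl fun j _ => by simp [B', i.2]
  rw [Measure.map_apply hΦ (hs.prod (.univ_pi hB)),
    Measure.restrict_apply (hΦ (hs.prod (.univ_pi hB))), hset]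
  refine (ENNReal.toReal_eq_toReal_iff' (measure_ne_top _ _)
    (ENNReal.mul_ne_top (measure_ne_top _ _)
      (ENNReal.prod_ne_top fun _ _ => measure_ne_top _ _))).1 ?_
  rw [h s hs a M B' hB', hprod, ENNReal.toReal_mul, ENNReal.toReal_prod, withDensity_apply _ hs,
    integral_eq_lintegral_of_nonneg_ae (ae_of_all _ (poissonWeight_nonneg lam a))
      (measurable_poissonWeight lam a).aestronglyMeasurable]

theorem HasJointLaw.setLIntegral_eq [IsFiniteMeasure μ] [IsProbabilityMeasure ν]
    (h : HasJointLaw μ lam k S N O AO ν) (hS : Measurable S) (hO : ∀ i j, Measurable (O i j))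
    (hAO : ∀ i j l, Measurable (AO i j l)) (a : Fin n → ℕ) (M : ℕ) {F : ℝ → ℝ≥0∞}
    (hF : Measurable F) {G : {i // i < k} × Fin M → ℝ × (Fin n → ℕ) → ℝ≥0∞}
    (hG : ∀ p, Measurable (G p)) :
    ∫⁻ ω in Function.swap N ⁻¹' {a}, F (S ω) * ∏ p, G p (overheadChain O AO p.1 p.2 ω) ∂μ
      = (∫⁻ x, ENNReal.ofReal (poissonWeight lam a x) * F x ∂μ.map S) *
          ∏ p, ∫⁻ y, G p y ∂ν := by
  have := isFiniteMeasure_withDensity_poissonWeight (μ := μ) S lam a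
  have hΦ : Measurable fun ω =>
      (S ω, fun p : {i // i < k} × Fin M => overheadChain O AO p.1 p.2 ω) :=
    hS.prodMk (measurable_pi_lambda _ fun p => measurable_overheadChain hO hAO _ _)
  have hprod : Measurable fun y : (ℝ × ({i // i < k} × Fin M → ℝ × (Fin n → ℕ))) =>
      F y.1 * ∏ p, G p (y.2 p) :=
    (hF.comp measurable_fst).mul (Finset.measurable_prod _ fun p _ =>
      (hG p).comp ((measurable_pi_apply p).comp measurable_snd))
  rw [← lintegral_map hprod hΦ, h.map_restrict_eq_prod hS hO hAO a M]
  have hsplit := lintegral_prod_mul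
    (μ := (μ.map S).withDensity fun x => ENNReal.ofReal (poissonWeight lam a x))
    (ν := Measure.pi fun _ : {i // i < k} × Fin M => ν) (g := fun y => ∏ p, G p (y p))
    hF.aemeasurable
    (Finset.measurable_prod _ fun p _ => (hG p).comp (measurable_pi_apply p)).aemeasurable
  rw [hsplit, lintegral_fintype_prod_eq_prod _ hG,
    lintegral_withDensity_eq_lintegral_mul _ (measurable_poissonWeight lam a).ennreal_ofReal hF]
  simp only [Pi.mul_apply]

theorem HasJointLaw.setLIntegral_addChar_eq [IsFiniteMeasure μ]
    [IsProbabilityMeasure ν] (h : HasJointLaw μ lam k S N O AO ν) (hS : Measurable S)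
    (hN : ∀ i, Measurable (N i)) (hO : ∀ i j, Measurable (O i j))
    (hAO : ∀ i j l, Measurable (AO i j l)) {ψ : AddChar (ℝ × (Fin n → ℕ)) ℝ}
    (hψ : Measurable ψ) (hψ0 : ∀ y, 0 ≤ ψ y) {g : ℝ} (hg0 : 0 ≤ g)
    (hg : ENNReal.ofReal g = ∫⁻ y, ENNReal.ofReal (ψ y) ∂ν) (a : Fin n → ℕ) :
    ∫⁻ ω in Function.swap N ⁻¹' {a}, ENNReal.ofReal (ψ (effectiveSizeArrivals k S N O AO ω)) ∂μ
      = ∫⁻ x, ENNReal.ofReal (poissonWeight lam a x * ψ (x, a) *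
          ∏ i ∈ univ.filter (fun i => i < k), g ^ a i) ∂μ.map S := by
  set M := univ.sup a
  have hM : ∀ i, a i ≤ M := fun i => le_sup (mem_univ i)
  -- On `{N = a}` only the first `a i` chains of class `i` enter; the other chains of the
  -- `Fin M` block get the factor `1`.
  set G : {i // i < k} × Fin M → ℝ × (Fin n → ℕ) → ℝ≥0∞ := fun p y =>
    if (p.2 : ℕ) < a p.1 then ENNReal.ofReal (ψ y) else 1
  have hG : ∀ p, Measurable (G p) := fun p => by
    by_cases hp : (p.2 : ℕ) < a p.1
    · simpa [G, hp] using hψ.ennreal_ofReal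
    · simp [G, hp]
  have hfactor : ∀ ω ∈ Function.swap N ⁻¹' {a},
      ENNReal.ofReal (ψ (effectiveSizeArrivals k S N O AO ω))
        = ENNReal.ofReal (ψ (S ω, a)) * ∏ p, G p (overheadChain O AO p.1 p.2 ω) :=
      fun ω hω => by
    rw [addChar_effectiveSizeArrivals_of_swap_eq ψ hω, ENNReal.ofReal_mul (hψ0 _),
      ENNReal.ofReal_prod_of_nonneg fun i _ => prod_nonneg fun j _ => hψ0 _]
    simp only [G, prod_subtype_prod_fin_ite (· < k) hM fun i j =>
      ENNReal.ofReal (ψ (overheadChain O AO i j ω))]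
    congr 1
    exact prod_congr rfl fun i _ => ENNReal.ofReal_prod_of_nonneg fun j _ => hψ0 _
  have hGint : ∏ p, ∫⁻ y, G p y ∂ν
      = ENNReal.ofReal (∏ i ∈ univ.filter (fun i => i < k), g ^ a i) :=
    calc ∏ p, ∫⁻ y, G p y ∂ν
        = ∏ p : {i // i < k} × Fin M, (if (p.2 : ℕ) < a p.1 then ENNReal.ofReal g else 1) :=
          prod_congr rfl fun p _ => by by_cases hp : (p.2 : ℕ) < a p.1 <;> simp [G, hp, hg]
      _ = ∏ i ∈ univ.filter (fun i => i < k), ∏ j ∈ range (a i), ENNReal.ofReal g :=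
          prod_subtype_prod_fin_ite (· < k) hM fun _ _ => ENNReal.ofReal g
      _ = _ := by
          rw [ENNReal.ofReal_prod_of_nonneg fun i _ => pow_nonneg hg0 _]
          simp [ENNReal.ofReal_pow hg0]
  have hF : Measurable fun x => ENNReal.ofReal (ψ (x, a)) :=
    (hψ.comp measurable_prodMk_right).ennreal_ofReal
  have hset : MeasurableSet (Function.swap N ⁻¹' {a}) :=
    measurable_pi_lambda _ hN (measurableSet_singleton a)
  rw [setLIntegral_congr_fun hset hfactor, h.setLIntegral_eq hS hO hAO a M hF hG, hGint,
    ← lintegral_mul_const' _ _ ENNReal.ofReal_ne_top]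
  congr 1
  ext x
  rw [ENNReal.ofReal_mul (mul_nonneg (poissonWeight_nonneg lam a x) (hψ0 _)),
    ENNReal.ofReal_mul (poissonWeight_nonneg lam a x)]

theorem HasJointLaw.lintegral_jointTransformChar_eq [IsFiniteMeasure μ]
    [IsProbabilityMeasure ν] (h : HasJointLaw μ lam k S N O AO ν) (hlam : ∀ l, 0 ≤ lam l)
    (hS : Measurable S) (hSnonneg : ∀ ω, 0 ≤ S ω) (hN : ∀ i, Measurable (N i))
    (hO : ∀ i j, Measurable (O i j)) (hAO : ∀ i j l, Measurable (AO i j l)) (θ : ℝ)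
    {z : Fin n → ℝ} (hz : ∀ l, 0 ≤ z l) {g : ℝ} (hg0 : 0 ≤ g)
    (hg : ENNReal.ofReal g = ∫⁻ y, ENNReal.ofReal (jointTransformChar θ z y) ∂ν) :
    ∫⁻ ω, ENNReal.ofReal (jointTransformChar θ z (effectiveSizeArrivals k S N O AO ω)) ∂μ
      = ∫⁻ x, ENNReal.ofReal (exp (-((θ + ∑ i ∈ univ.filter (fun i => k ≤ i), lam i * (1 - z i)
          + ∑ i ∈ univ.filter (fun i => i < k), lam i * (1 - z i * g)) * x))) ∂μ.map S := by
  have hψ := measurable_jointTransformChar θ z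
  rw [lintegral_eq_tsum_setLIntegral_preimage_singleton (measurable_pi_lambda _ hN),
    tsum_congr fun a => h.setLIntegral_addChar_eq hS hN hO hAO hψ
      (jointTransformChar_nonneg hz) hg0 hg a,
    ← lintegral_tsum fun a => ?_]
  · refine lintegral_congr_ae ?_
    filter_upwards [(ae_map_iff hS.aemeasurable measurableSet_Ici).2 (ae_of_all _ hSnonneg)]
      with x hx
    exact tsum_ofReal_poissonWeight_mul_jointTransformChar hlam k θ hz hg0 hx
  · exact ((measurable_poissonWeight lam a).mul (hψ.comp measurable_prodMk_right)
      |>.mul_const _).ennreal_ofReal.aemeasurable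

end JobModel

theorem job_joint_transform_general
    {Ω : Type*} [MeasurableSpace Ω] (μ : Measure Ω) [IsProbabilityMeasure μ]
    (n : ℕ) (lam : Fin n → ℝ) (hlam : ∀ i, 0 < lam i) (k : Fin n)
    (S : Ω → ℝ) (hS : Measurable S) (hSnonneg : ∀ ω, 0 ≤ S ω)
    (N : Fin n → Ω → ℕ) (hN : ∀ i, Measurable (N i))
    (O : Fin n → ℕ → Ω → ℝ) (hO : ∀ i j, Measurable (O i j))
    (AO : Fin n → ℕ → Fin n → Ω → ℕ) (hAO : ∀ i j l, Measurable (AO i j l))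
    -- `ν` is the common law of a single overhead chain `(duration, arrival vector)`,
    -- supported on nonnegative durations
    (ν : Measure (ℝ × (Fin n → ℕ))) [IsProbabilityMeasure ν]
    (hν : ν {p | p.1 < 0} = 0)
    -- joint law: `(S, N)` has conditionally Poisson counts given `S`, and the chains
    -- `(O i j, AO i j)` for `i < k` are i.i.d. with common law `ν`, independent of `(S, N)`
    (hJoint : ∀ (s : Set ℝ), MeasurableSet s → ∀ (a : Fin n → ℕ) (m : ℕ)
      (B : Fin n → Fin m → Set (ℝ × (Fin n → ℕ))), (∀ i j, MeasurableSet (B i j)) →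
      (μ {ω | S ω ∈ s ∧ (∀ l, N l ω = a l) ∧
          ∀ i, i < k → ∀ j : Fin m, (O i j ω, fun l => AO i j l ω) ∈ B i j}).toReal
        = (∫ x in s, ∏ l, poissonPMFReal (Real.toNNReal (lam l * x)) (a l) ∂(μ.map S)) *
          ∏ i ∈ Finset.univ.filter (fun i => i < k), ∏ j : Fin m, (ν (B i j)).toReal)
    -- effective size and total arrival counts
    (R : Ω → ℝ)
    (hR : ∀ ω, R ω = S ω + ∑ i ∈ Finset.univ.filter (fun i => i < k),
        ∑ j ∈ Finset.range (N i ω), O i j ω)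
    (A : Fin n → Ω → ℕ)
    (hA : ∀ l ω, A l ω = N l ω + ∑ i ∈ Finset.univ.filter (fun i => i < k),
        ∑ j ∈ Finset.range (N i ω), AO i j l ω)
    (θ : ℝ) (hθ : 0 ≤ θ) (z : Fin n → ℝ) (hz : ∀ i, z i ∈ Set.Icc (0 : ℝ) 1)
    -- the common joint transform of a single overhead chain
    (g : ℝ)
    (hg : g = ∫ p, Real.exp (-(θ * p.1)) * ∏ l, (z l) ^ (p.2 l) ∂ν) :
    ∫ ω, Real.exp (-(θ * R ω)) * ∏ l, (z l) ^ (A l ω) ∂μ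
      = ∫ ω, Real.exp (-((θ
            + (∑ i ∈ Finset.univ.filter (fun i => k ≤ i), lam i * (1 - z i))
            + (∑ i ∈ Finset.univ.filter (fun i => i < k), lam i * (1 - z i * g)))
          * S ω)) ∂μ := by
  have hz0 : ∀ l, 0 ≤ z l := fun l => (hz l).1
  have hg0 : 0 ≤ g := hg ▸ integral_nonneg (jointTransformChar_nonneg hz0)
  have hgψ : ENNReal.ofReal g = ∫⁻ y, ENNReal.ofReal (jointTransformChar θ z y) ∂ν :=
    hg ▸ ofReal_integral_eq_lintegral_ofReal (integrable_jointTransformChar hθ hz hν)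
      (ae_of_all _ (jointTransformChar_nonneg hz0))
  have hexp : Measurable fun x : ℝ => exp (-((θ
      + (∑ i ∈ Finset.univ.filter (fun i => k ≤ i), lam i * (1 - z i))
      + (∑ i ∈ Finset.univ.filter (fun i => i < k), lam i * (1 - z i * g))) * x)) := by
    fun_prop
  change ∫ ω, jointTransformChar θ z (R ω, fun l => A l ω) ∂μ = _
  simp_rw [prodMk_eq_effectiveSizeArrivals hR hA]
  rw [integral_eq_lintegral_of_nonneg_ae (ae_of_all _ fun ω => jointTransformChar_nonneg hz0 _)
      ((measurable_jointTransformChar θ z).comp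
        (measurable_effectiveSizeArrivals hS hN hO hAO)).aestronglyMeasurable,
    integral_eq_lintegral_of_nonneg_ae (ae_of_all _ fun ω => exp_nonneg _)
      (hexp.comp hS).aestronglyMeasurable, ← lintegral_map hexp.ennreal_ofReal hS]
  exact congrArg ENNReal.toReal <| HasJointLaw.lintegral_jointTransformChar_eq hJoint
    (fun l => (hlam l).le) hS hSnonneg hN hO hAO θ hz0 hg0 hgψ

/-- **From the overhead-chain joint transform to the job joint transform.**
`S` is a job's original size with conditionally Poisson counts `N i` of class-`i`
arrivals during it; each class-`< k` arrival (the `j`-th class-`i` one) appends an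
i.i.d. overhead chain of duration `O i j` carrying its own arrival vector `AO i j`,
independent of `(S, N)`, with common law `ν` and joint transform `g`.  With effective
size `R = S + ∑_{i<k} ∑_{j<N i} O i j` and total arrivals
`A l = N l + ∑_{i<k} ∑_{j<N i} AO i j l`, the job joint transform is
`S̃(θ + ∑_{i≥k} λ_i(1-z_i) + ∑_{i<k} λ_i(1 - z_i g(θ,z)))`. -/
theorem job_joint_transform
    {Ω : Type*} [MeasurableSpace Ω] (μ : Measure Ω) [IsProbabilityMeasure μ]
    (n : ℕ) (lam : Fin n → ℝ) (hlam : ∀ i, 0 < lam i) (k : Fin n)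
    (S : Ω → ℝ) (hS : Measurable S) (hSnonneg : ∀ ω, 0 ≤ S ω)
    (N : Fin n → Ω → ℕ) (hN : ∀ i, Measurable (N i))
    (O : Fin n → ℕ → Ω → ℝ) (hO : ∀ i j, Measurable (O i j))
    (hOnonneg : ∀ i j ω, 0 ≤ O i j ω)
    (AO : Fin n → ℕ → Fin n → Ω → ℕ) (hAO : ∀ i j l, Measurable (AO i j l))
    -- `ν` is the common law of a single overhead chain `(duration, arrival vector)`,
    -- supported on nonnegative durations
    (ν : Measure (ℝ × (Fin n → ℕ))) [IsProbabilityMeasure ν]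
    (hν : ν {p | p.1 < 0} = 0)
    -- joint law: `(S, N)` has conditionally Poisson counts given `S`, and the chains
    -- `(O i j, AO i j)` for `i < k` are i.i.d. with common law `ν`, independent of `(S, N)`
    (hJoint : ∀ (s : Set ℝ), MeasurableSet s → ∀ (a : Fin n → ℕ) (m : ℕ)
      (B : Fin n → Fin m → Set (ℝ × (Fin n → ℕ))), (∀ i j, MeasurableSet (B i j)) →
      (μ {ω | S ω ∈ s ∧ (∀ l, N l ω = a l) ∧
          ∀ i, i < k → ∀ j : Fin m, (O i j ω, fun l => AO i j l ω) ∈ B i j}).toReal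
        = (∫ x in s, ∏ l, poissonPMFReal (Real.toNNReal (lam l * x)) (a l) ∂(μ.map S)) *
          ∏ i ∈ Finset.univ.filter (fun i => i < k), ∏ j : Fin m, (ν (B i j)).toReal)
    -- effective size and total arrival counts
    (R : Ω → ℝ)
    (hR : ∀ ω, R ω = S ω + ∑ i ∈ Finset.univ.filter (fun i => i < k),
        ∑ j ∈ Finset.range (N i ω), O i j ω)
    (A : Fin n → Ω → ℕ)
    (hA : ∀ l ω, A l ω = N l ω + ∑ i ∈ Finset.univ.filter (fun i => i < k),
        ∑ j ∈ Finset.range (N i ω), AO i j l ω)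
    (θ : ℝ) (hθ : 0 ≤ θ) (z : Fin n → ℝ) (hz : ∀ i, z i ∈ Set.Icc (0 : ℝ) 1)
    -- the common joint transform of a single overhead chain
    (g : ℝ)
    (hg : g = ∫ p, Real.exp (-(θ * p.1)) * ∏ l, (z l) ^ (p.2 l) ∂ν) :
    ∫ ω, Real.exp (-(θ * R ω)) * ∏ l, (z l) ^ (A l ω) ∂μ
      = ∫ ω, Real.exp (-((θ
            + (∑ i ∈ Finset.univ.filter (fun i => k ≤ i), lam i * (1 - z i))
            + (∑ i ∈ Finset.univ.filter (fun i => i < k), lam i * (1 - z i * g)))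
          * S ω)) ∂μ :=
  job_joint_transform_general μ n lam hlam k S hS hSnonneg N hN O hO AO hAO ν hν hJoint R hR A hA θ
    hθ z hz g hg
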